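/- Define an action of G_n on Z = π_n^{-1}(G_n) ∩ Y_n by (i,t,j)·(α,s,β) = (i_0…i_n α_{n+1} α_{n+2}…, t, β) whenever t = s and j = α|n. This action is well-defined (the result lies in Z), free, and transitive, and π_n restricted to Z is equivariant with respect to it. -/
import Mathlib


open TopologicalSpace

variable {T : Type*} [TopologicalSpace T]

/-- `W_{α|n} = ⋂_{k=0}^n V^{(k)}_{α_k}`, the intersection determined by the
first `n+1` entries of the sequence `α`. -/
def Wset (V : ℕ → ℕ → Set T) (α : ℕ → ℕ) (n : ℕ) : Set T :=
  ⋂ k ≤ n, V k (α k)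

/-- `α` is a valid index sequence: `α k` indexes a member of the cover `V^{(k)}`. -/
def Bnd (nk : ℕ → ℕ) (α : ℕ → ℕ) : Prop := ∀ k, α k ≤ nk k

/-- Tail equivalence of index sequences. -/
def TailEq (α β : ℕ → ℕ) : Prop := {k : ℕ | α k ≠ β k}.Finite

/-- Membership `(α,t,β) ∈ Ǧ_∞`: `α ∼ β` and
`t ∈ ⋂_N closure W_{α|N} ∩ ⋂_N closure W_{β|N}`. -/
def InGck (nk : ℕ → ℕ) (V : ℕ → ℕ → Set T) (α : ℕ → ℕ) (t : T) (β : ℕ → ℕ) : Prop :=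
  Bnd nk α ∧ Bnd nk β ∧ TailEq α β ∧
    (∀ N, t ∈ closure (Wset V α N)) ∧ (∀ N, t ∈ closure (Wset V β N))

/-- The splice `i₀…iₙ α_{n+1} α_{n+2}…` of a finite index tuple `i` with the
tail of `α`. -/
def glue (n : ℕ) (i α : ℕ → ℕ) : ℕ → ℕ := fun k => if k ≤ n then i k else α k

/-- Membership `(i,t,j) ∈ Gₙ`: `i, j` are valid index tuples of length `n+1`
and `t ∈ W_i ∩ W_j`. -/
def InGn (nk : ℕ → ℕ) (V : ℕ → ℕ → Set T) (n : ℕ)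
    (i : ℕ → ℕ) (t : T) (j : ℕ → ℕ) : Prop :=
  (∀ k ≤ n, i k ≤ nk k ∧ j k ≤ nk k) ∧ t ∈ Wset V i n ∧ t ∈ Wset V j n

/-- Membership `(α,t,β) ∈ Z = πₙ⁻¹(Gₙ) ∩ Yₙ`: `(α,t,β) ∈ Ǧ_∞`,
`t ∈ W_{α|n} ∩ W_{β|n}`, and `α_k = β_k` for `k > n`. -/
def InZn (nk : ℕ → ℕ) (V : ℕ → ℕ → Set T) (n : ℕ)
    (α : ℕ → ℕ) (t : T) (β : ℕ → ℕ) : Prop :=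
  InGck nk V α t β ∧ t ∈ Wset V α n ∧ t ∈ Wset V β n ∧ ∀ k, n < k → α k = β k

lemma Wset_congr (V : ℕ → ℕ → Set T) {γ δ : ℕ → ℕ} (n : ℕ)
    (h : ∀ k ≤ n, γ k = δ k) : Wset V γ n = Wset V δ n := by
  unfold Wset
  exact Set.iInter₂_congr fun k hk => by rw [h k hk]

lemma mem_Wset {V : ℕ → ℕ → Set T} {γ : ℕ → ℕ} {n : ℕ} {t : T} :
    t ∈ Wset V γ n ↔ ∀ k ≤ n, t ∈ V k (γ k) := by
  simp [Wset]

lemma isOpen_Wset {V : ℕ → ℕ → Set T} {γ : ℕ → ℕ} {n : ℕ}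
    (h : ∀ k ≤ n, IsOpen (V k (γ k))) : IsOpen (Wset V γ n) := by
  have : Wset V γ n = ⋂ k ∈ Set.Iic n, V k (γ k) := rfl
  rw [this]
  exact (Set.finite_Iic n).isOpen_biInter fun k hk => h k hk

/-- The action of `Gₙ` on `Z = πₙ⁻¹(Gₙ) ∩ Yₙ` given by
`(i,t,j)·(α,t,β) = (i₀…iₙ α_{n+1}…, t, β)` (defined when `j|n = α|n`)
is well defined (its result lies in `Z`), free, and transitive, and
`πₙ(α,t,β) = (α|n, t, β|n)` is equivariant with respect to it:
`πₙ((i,t,j)·(α,t,β)) = (i,t,j)·(α|n,t,β|n) = (i,t,β|n)`. -/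
theorem Gn_action_on_Z
    (nk : ℕ → ℕ) (V : ℕ → ℕ → Set T)
    (hVopen : ∀ k i, i ≤ nk k → IsOpen (V k i))
    (hVcover : ∀ k (t : T), ∃ i ≤ nk k, t ∈ V k i)
    (n : ℕ) :
    -- well-definedness: the result of the action lies in `Z`
    (∀ (i j α β : ℕ → ℕ) (t : T), InGn nk V n i t j → InZn nk V n α t β →
      (∀ k ≤ n, j k = α k) → InZn nk V n (glue n i α) t β) ∧
    -- freeness: `γ·x = x` forces `γ = d(γ) = r_act(x)`
    (∀ (i j α β : ℕ → ℕ) (t : T), InGn nk V n i t j → InZn nk V n α t β →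
      (∀ k ≤ n, j k = α k) → (∀ k, glue n i α k = α k) → ∀ k ≤ n, i k = j k) ∧
    -- transitivity: elements of `Z` with the same source differ by the action
    (∀ (α γ β : ℕ → ℕ) (t : T), InZn nk V n α t β → InZn nk V n γ t β →
      ∃ i j : ℕ → ℕ, InGn nk V n i t j ∧ (∀ k ≤ n, j k = γ k) ∧
        ∀ k, glue n i γ k = α k) ∧
    -- equivariance of `πₙ`: the first `n+1` coordinates of `γ·x` are those of `γ`
    (∀ (i j α β : ℕ → ℕ) (t : T), InGn nk V n i t j → InZn nk V n α t β →
      (∀ k ≤ n, j k = α k) → ∀ k ≤ n, glue n i α k = i k) := by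
  refine ⟨?_, ?_, ?_, ?_⟩
  · -- well-definedness
    rintro i j α β t ⟨hbnd, hti, htj⟩ ⟨⟨hα, hβ, htail, hclα, hclβ⟩, htα, htβ, heqβ⟩ hjα
    have hglue_eq : ∀ k ≤ n, glue n i α k = i k := fun k hk => if_pos hk
    have hWglue : Wset V (glue n i α) n = Wset V i n := Wset_congr V n hglue_eq
    have hiopen : IsOpen (Wset V i n) :=
      isOpen_Wset fun k hk => hVopen k (i k) (hbnd k hk).1
    refine ⟨⟨?_, hβ, ?_, ?_, hclβ⟩, ?_, htβ, ?_⟩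
    · intro k
      by_cases hk : k ≤ n
      · simpa [glue, hk] using (hbnd k hk).1
      · simpa [glue, hk] using hα k
    · apply Set.Finite.subset (Set.finite_Iic n)
      intro k hk
      by_contra hkn
      have hkn' : ¬ k ≤ n := hkn
      simp only [Set.mem_setOf_eq, glue, if_neg hkn', heqβ k (not_le.mp hkn')] at hk
      exact hk rfl
    · intro N
      by_cases hN : N ≤ n
      · apply subset_closure
        exact mem_Wset.mpr fun k hk => by
          simpa [glue, hk.trans hN] using mem_Wset.mp hti k (hk.trans hN)
      · have hsub : Wset V i n ∩ Wset V α N ⊆ Wset V (glue n i α) N := by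
          rintro x ⟨hx1, hx2⟩
          refine mem_Wset.mpr fun k hk => ?_
          by_cases hkn : k ≤ n
          · simpa [glue, hkn] using mem_Wset.mp hx1 k hkn
          · simpa [glue, hkn] using mem_Wset.mp hx2 k hk
        exact closure_mono hsub
          (hiopen.inter_closure ⟨hti, hclα N⟩)
    · rw [hWglue]; exact hti
    · intro k hk
      have : glue n i α k = α k := if_neg (not_le.mpr hk)
      rw [this]; exact heqβ k hk
  · -- freeness
    rintro i j α β t _ _ hjα hfix k hk
    have := hfix k
    simp only [glue, if_pos hk] at this
    rw [this, hjα k hk]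
  · -- transitivity
    rintro α γ β t ⟨⟨hα, _, _, _, _⟩, htα, _, heqα⟩ ⟨⟨hγ, _, _, _, _⟩, htγ, _, heqγ⟩
    refine ⟨α, γ, ⟨fun k hk => ⟨hα k, hγ k⟩, htα, htγ⟩, fun _ _ => rfl, fun k => ?_⟩
    by_cases hk : k ≤ n
    · exact if_pos hk
    · have hk' := not_le.mp hk
      simp only [glue, if_neg hk]
      rw [heqγ k hk', heqα k hk']
  · -- equivariance
    rintro i j α β t _ _ _ k hk
    exact if_pos hk
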